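/- One-point function for two commuting SLE_{8/3} paths: for fixed z ∈ ℍ, with p_{iy}(z) = (Im(1/z)/Im((iy)^{-1}))·G(σ(z,iy)), one has lim_{y→∞} p_{iy}(z) = -(4/5)·Im(z)·Im(1/z) = (4/5)sin²(arg z). -/

import Mathlib

/-!
The coefficients of `₂F₁(1, 4/3; 5/3; s)` lie in `[0, 1]` and begin `1, 4/5`, so the series is
`1 + (4/5)s + O(s²)`. Hence `G(1) = 0` and `G'(1) = -(1 - 4/5) = -1/5`. Along `w = iy` we have
`Im(1/w) = -1/y` and `1 - σ(z, iy) = 4 Im(z) y / |z + iy|²`, so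
`p_{iy}(z) = Im(1/z) · y(1 - σ) · (G(σ) - G(1))/(σ - 1) → Im(1/z) · 4 Im(z) · (-1/5)`.
-/

open Real Filter Set Asymptotics MeasureTheory Complex

/-- The Gauss hypergeometric function `₂F₁(a, b; c; t)`, defined by its power series. -/
noncomputable def hyp (a b c t : ℝ) : ℝ :=
  ∑' n : ℕ, ((ascPochhammer ℝ n).eval a * (ascPochhammer ℝ n).eval b) /
    ((ascPochhammer ℝ n).eval c * (n.factorial : ℝ)) * t ^ n

/-- `G(t) = 1 - t·₂F₁(1, 4/3; 5/3; 1-t)`. -/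
noncomputable def Gfun (t : ℝ) : ℝ := 1 - t * hyp 1 (4/3) (5/3) (1 - t)

/-- `σ(z,w) = |z-w|²/|z - w̄|²`. -/
noncomputable def sigmaC (z w : ℂ) : ℝ :=
  ‖z - w‖ ^ 2 / ‖z - (starRingEnd ℂ) w‖ ^ 2

/-- `p_{iy}(z) = (Im(1/z)/Im(1/(iy)))·G(σ(z,iy))`. -/
noncomputable def pbulk (w z : ℂ) : ℝ := ((1 / z).im / (1 / w).im) * Gfun (sigmaC z w)

open Topology

theorem ascPochhammer_eval_le_eval {b c : ℝ} (hb : 0 < b) (hbc : b ≤ c) (n : ℕ) :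
    (ascPochhammer ℝ n).eval b ≤ (ascPochhammer ℝ n).eval c := by
  induction n with
  | zero => simp
  | succ n ih =>
    simp only [ascPochhammer_succ_eval]
    exact mul_le_mul ih (by linarith) (by positivity) (ascPochhammer_pos n c (by linarith)).le

theorem hyp_zero (a b c : ℝ) : hyp a b c 0 = 1 := by
  rw [hyp, tsum_eq_single 0 (fun n hn => by simp [hn])]
  simp

/-- Coefficients of `₂F₁(1, b; c; ·)`: there `(1)ₙ = n!` cancels the factorial. -/
noncomputable def hypCoeff (b c : ℝ) (n : ℕ) : ℝ :=
  (ascPochhammer ℝ n).eval b / (ascPochhammer ℝ n).eval c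

theorem hyp_one_left (b c s : ℝ) : hyp 1 b c s = ∑' n, hypCoeff b c n * s ^ n := by
  unfold hyp
  congr 1 with n
  rw [hypCoeff, ascPochhammer_eval_one, mul_comm (n.factorial : ℝ),
    mul_div_mul_right _ _ (Nat.cast_ne_zero.2 n.factorial_ne_zero)]

theorem abs_hypCoeff_le_one {b c : ℝ} (hb : 0 < b) (hbc : b ≤ c) (n : ℕ) :
    |hypCoeff b c n| ≤ 1 := by
  have hc := ascPochhammer_pos n c (hb.trans_le hbc)
  rw [hypCoeff, abs_of_nonneg (div_nonneg (ascPochhammer_pos n b hb).le hc.le), div_le_one hc]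
  exact ascPochhammer_eval_le_eval hb hbc n

theorem abs_hyp_one_left_sub_le {b c s : ℝ} (hb : 0 < b) (hbc : b ≤ c) (hs : |s| < 1) :
    |hyp 1 b c s - 1 - b / c * s| ≤ s ^ 2 / (1 - |s|) := by
  have hgeom := hasSum_geometric_of_lt_one (abs_nonneg s) hs
  have hterm : ∀ n, ‖hypCoeff b c n * s ^ n‖ ≤ |s| ^ n := fun n => by
    rw [Real.norm_eq_abs, abs_mul, abs_pow]
    exact mul_le_of_le_one_left (by positivity) (abs_hypCoeff_le_one hb hbc n)
  have hsum : Summable (fun n => hypCoeff b c n * s ^ n) :=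
    .of_norm_bounded hgeom.summable hterm
  have htail : hyp 1 b c s - 1 - b / c * s = ∑' n, hypCoeff b c (n + 2) * s ^ (n + 2) := by
    rw [hyp_one_left, ← hsum.sum_add_tsum_nat_add 2]
    have h0 : hypCoeff b c 0 = 1 := by simp [hypCoeff]
    have h1 : hypCoeff b c 1 = b / c := by simp [hypCoeff]
    simp only [Finset.sum_range_succ, Finset.sum_range_zero, h0, h1]
    ring
  rw [htail, ← Real.norm_eq_abs, ← sq_abs, div_eq_inv_mul]
  exact tsum_of_norm_bounded (hgeom.mul_right _) fun n => (hterm (n + 2)).trans_eq (pow_add _ _ _)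

theorem hasDerivAt_hyp_one_left_zero {b c : ℝ} (hb : 0 < b) (hbc : b ≤ c) :
    HasDerivAt (hyp 1 b c) (b / c) 0 := by
  rw [hasDerivAt_iff_isLittleO_nhds_zero]
  refine IsBigO.trans_isLittleO (g := fun h : ℝ => h ^ 2) ?_ (isLittleO_pow_id one_lt_two)
  refine IsBigO.of_bound 2 ?_
  filter_upwards [Metric.ball_mem_nhds (0 : ℝ) one_half_pos] with h hh
  rw [Metric.mem_ball, dist_zero_right, Real.norm_eq_abs] at hh
  rw [zero_add, hyp_zero, smul_eq_mul, mul_comm h, Real.norm_eq_abs, Real.norm_eq_abs,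
    abs_of_nonneg (sq_nonneg h)]
  calc |hyp 1 b c h - 1 - b / c * h| ≤ h ^ 2 / (1 - |h|) :=
        abs_hyp_one_left_sub_le hb hbc (by linarith)
    _ ≤ 2 * h ^ 2 := by
        rw [div_le_iff₀ (by linarith)]
        nlinarith [sq_nonneg h]

theorem Gfun_one : Gfun 1 = 0 := by simp [Gfun, hyp_zero]

theorem hasDerivAt_Gfun_one : HasDerivAt Gfun (-(1 / 5)) 1 := by
  have hF : HasDerivAt (fun t => hyp 1 (4/3) (5/3) (1 - t)) (4/3 / (5/3) * -1) 1 :=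
    (hasDerivAt_hyp_one_left_zero (by norm_num) (by norm_num)).comp_of_eq 1
      ((hasDerivAt_id 1).const_sub 1) (sub_self 1).symm
  have hG : HasDerivAt Gfun (-(1 * hyp 1 (4/3) (5/3) (1 - 1) + 1 * (4/3 / (5/3) * -1))) 1 :=
    ((hasDerivAt_id' 1).mul hF).const_sub 1
  norm_num [hyp_zero] at hG
  exact hG

theorem im_one_div_I_mul (y : ℝ) : (1 / (I * y)).im = -y⁻¹ := by
  simp [Complex.inv_im, Complex.normSq_apply]

theorem sigmaC_I_mul (z : ℂ) (y : ℝ) :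
    sigmaC z (I * y) = (z.re ^ 2 + (z.im - y) ^ 2) / (z.re ^ 2 + (z.im + y) ^ 2) := by
  have hw : z - I * y = ⟨z.re, z.im - y⟩ := Complex.ext (by simp) (by simp)
  have hw' : z - starRingEnd ℂ (I * y) = ⟨z.re, z.im + y⟩ := Complex.ext (by simp) (by simp)
  rw [sigmaC, hw, hw', ← normSq_eq_norm_sq, ← normSq_eq_norm_sq, normSq_mk, normSq_mk]
  ring

theorem one_sub_sigmaC_I_mul {z : ℂ} {y : ℝ} (hz : 0 ≤ z.im) (hy : 0 < y) :
    1 - sigmaC z (I * y) = 4 * z.im * y / (z.re ^ 2 + (z.im + y) ^ 2) := by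
  have hden : 0 < z.re ^ 2 + (z.im + y) ^ 2 := by positivity
  rw [sigmaC_I_mul]
  field_simp
  ring

theorem tendsto_mul_one_sub_sigmaC_I_mul {z : ℂ} (hz : 0 ≤ z.im) :
    Tendsto (fun y : ℝ => y * (1 - sigmaC z (I * y))) atTop (𝓝 (4 * z.im)) := by
  have hu : Tendsto (fun y : ℝ => y⁻¹) atTop (𝓝 0) := tendsto_inv_atTop_zero
  have hlim := (tendsto_const_nhds (x := 4 * z.im)).div
    (((hu.const_mul z.re).pow 2).add (((hu.const_mul z.im).add_const 1).pow 2)) (by simp)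
  norm_num at hlim
  refine hlim.congr' ?_
  filter_upwards [eventually_gt_atTop 0] with y hy
  rw [Pi.div_apply, one_sub_sigmaC_I_mul hz hy]
  field_simp

theorem tendsto_sigmaC_I_mul {z : ℂ} (hz : 0 < z.im) :
    Tendsto (fun y : ℝ => sigmaC z (I * y)) atTop (𝓝[≠] 1) := by
  have hsub := tendsto_inv_atTop_zero.mul (tendsto_mul_one_sub_sigmaC_I_mul hz.le)
  rw [zero_mul] at hsub
  refine tendsto_nhdsWithin_iff.2 ⟨?_, ?_⟩
  · have h1 := hsub.const_sub 1
    rw [sub_zero] at h1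
    refine h1.congr' ?_
    filter_upwards [eventually_gt_atTop 0] with y hy
    rw [inv_mul_cancel_left₀ hy.ne', sub_sub_cancel]
  · filter_upwards [eventually_gt_atTop 0] with y hy
    have hpos : 0 < 1 - sigmaC z (I * y) := by rw [one_sub_sigmaC_I_mul hz.le hy]; positivity
    exact (sub_pos.1 hpos).ne

theorem pbulk_I_mul (z : ℂ) (y : ℝ) :
    pbulk (I * y) z
      = (1 / z).im * (y * (1 - sigmaC z (I * y))) * slope Gfun 1 (sigmaC z (I * y)) := by
  have hG : Gfun (sigmaC z (I * y)) = (sigmaC z (I * y) - 1) * slope Gfun 1 (sigmaC z (I * y)) := by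
    have h := sub_smul_slope Gfun 1 (sigmaC z (I * y))
    rwa [smul_eq_mul, Gfun_one, vsub_eq_sub, sub_zero, eq_comm] at h
  rw [pbulk, im_one_div_I_mul, hG, div_neg, div_inv_eq_mul]
  ring

theorem im_mul_im_one_div (z : ℂ) : z.im * (1 / z).im = -Real.sin (arg z) ^ 2 := by
  rw [Complex.sin_arg, one_div, Complex.inv_im, div_pow, ← Complex.normSq_eq_norm_sq]
  ring

/-- for fixed `z ∈ ℍ`,
`lim_{y→∞} p_{iy}(z) = -(4/5)·Im(z)·Im(1/z) = (4/5)·sin²(arg z)`. -/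
theorem stmt19 (z : ℂ) (hz : 0 < z.im) :
    Tendsto (fun y : ℝ => pbulk (Complex.I * y) z) atTop
      (nhds (-(4/5) * z.im * (1 / z).im)) ∧
    -(4/5) * z.im * (1 / z).im = (4/5) * Real.sin z.arg ^ 2 := by
  refine ⟨?_, by linear_combination (-(4 / 5) : ℝ) * im_mul_im_one_div z⟩
  have hslope := (hasDerivAt_iff_tendsto_slope.1 hasDerivAt_Gfun_one).comp (tendsto_sigmaC_I_mul hz)
  have hlim := ((tendsto_mul_one_sub_sigmaC_I_mul hz.le).mul hslope).const_mul (1 / z).im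
  convert hlim using 2 with y
  · rw [pbulk_I_mul, mul_assoc]
    rfl
  · ring
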